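/- Let H be a real inner product space, let p ≥ 1 be a real number, and set M_p := 2p·(2p−1)·2^{2p−3}. Then for all x, h ∈ H one has | ‖x+h‖^{2p} − ‖x‖^{2p} − 2p·‖x‖^{2(p−1)}·⟨x,h⟩ | ≤ M_p·( ‖x‖^{2(p−1)}·‖h‖² + ‖h‖^{2p} ). -/

import Mathlib

open Set Filter

lemma hasDerivAt_psi (a b c t : ℝ) :
    HasDerivAt (fun u : ℝ => a + 2*b*u + c*u^2) (2*b + 2*c*t) t := by
  have h := ((hasDerivAt_id t).const_mul (2*b)).const_add a
  have h2 := (hasDerivAt_pow 2 t).const_mul c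
  have := h.add h2
  refine this.congr_deriv ?_
  push_cast
  ring

lemma hasDerivAt_g (p a b c t : ℝ) (h : 0 < a + 2*b*t + c*t^2) :
    HasDerivAt (fun u : ℝ => (a + 2*b*u + c*u^2)^p)
      ((2*b+2*c*t) * p * (a+2*b*t+c*t^2)^(p-1)) t :=
  (hasDerivAt_psi a b c t).rpow_const (Or.inl h.ne')

lemma hasDerivAt_g1 (p a b c t : ℝ) (h : 0 < a + 2*b*t + c*t^2) :
    HasDerivAt (fun u : ℝ => (2*b+2*c*u) * p * (a+2*b*u+c*u^2)^(p-1))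
      (2*c*p*(a+2*b*t+c*t^2)^(p-1)
        + (2*b+2*c*t)^2*(p*(p-1))*(a+2*b*t+c*t^2)^(p-2)) t := by
  have hu : HasDerivAt (fun u : ℝ => (2*b+2*c*u) * p) (2*c*p) t := by
    have : HasDerivAt (fun u : ℝ => 2*b + 2*c*u) (2*c) t := by
      simpa using ((hasDerivAt_id t).const_mul (2*c)).const_add (2*b)
    simpa using this.mul_const p
  have hv : HasDerivAt (fun u : ℝ => (a+2*b*u+c*u^2)^(p-1))
      ((2*b+2*c*t) * (p-1) * (a+2*b*t+c*t^2)^(p-1-1)) t :=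
    (hasDerivAt_psi a b c t).rpow_const (Or.inl h.ne')
  have := hu.mul hv
  refine this.congr_deriv ?_
  rw [show p-1-1 = p-2 by ring]
  ring

lemma key (p a b c S : ℝ) (hp : 1 ≤ p) (hc : 0 ≤ c) (hb : b^2 ≤ a*c)
    (hψ : ∀ t : ℝ, 0 < a + 2*b*t + c*t^2)
    (hS : ∀ t ∈ Set.Icc (0:ℝ) 1, a + 2*b*t + c*t^2 ≤ S) :
    |(a+2*b+c)^p - a^p - 2*p*a^(p-1)*b| ≤ p*(2*p-1)*c*S^(p-1) := by
  set g : ℝ → ℝ := fun u => (a + 2*b*u + c*u^2)^p with hg_def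
  set g1 : ℝ → ℝ := fun u => (2*b+2*c*u) * p * (a+2*b*u+c*u^2)^(p-1) with hg1_def
  set g2 : ℝ → ℝ := fun t => 2*c*p*(a+2*b*t+c*t^2)^(p-1)
        + (2*b+2*c*t)^2*(p*(p-1))*(a+2*b*t+c*t^2)^(p-2) with hg2_def
  have hg : ∀ t, HasDerivAt g (g1 t) t := fun t => hasDerivAt_g p a b c t (hψ t)
  have hg1 : ∀ t, HasDerivAt g1 (g2 t) t := fun t => hasDerivAt_g1 p a b c t (hψ t)
  set K : ℝ := 2*p*(2*p-1)*c*S^(p-1) with hK_def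
  -- g2 nonneg
  have hg2nonneg : ∀ t, 0 ≤ g2 t := by
    intro t
    have h1 : 0 ≤ (a+2*b*t+c*t^2)^(p-1) := Real.rpow_nonneg (hψ t).le _
    have h2 : 0 ≤ (a+2*b*t+c*t^2)^(p-2) := Real.rpow_nonneg (hψ t).le _
    have h3 : 0 ≤ (2*b+2*c*t)^2 := sq_nonneg _
    have : (0:ℝ) ≤ p*(p-1) := by nlinarith
    simp only [hg2_def]
    positivity
  -- g2 ≤ K on Icc
  have hg2le : ∀ t ∈ Set.Icc (0:ℝ) 1, g2 t ≤ K := by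
    intro t ht
    have hψt := hψ t
    set ψt := a+2*b*t+c*t^2
    have hP : 0 ≤ ψt^(p-1) := Real.rpow_nonneg hψt.le _
    have hQ : 0 ≤ ψt^(p-2) := Real.rpow_nonneg hψt.le _
    have hE : ψt^(p-2) * ψt = ψt^(p-1) := by
      rw [show p-1 = (p-2)+1 by ring, Real.rpow_add hψt, Real.rpow_one]
    have hsq : (2*b+2*c*t)^2 ≤ 4*c*ψt := by simp only [ψt]; nlinarith [hb]
    have hpp : (0:ℝ) ≤ p*(p-1) := by nlinarith
    have h1 : (2*b+2*c*t)^2*(p*(p-1))*ψt^(p-2) ≤ (4*c*ψt)*(p*(p-1))*ψt^(p-2) := by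
      apply mul_le_mul_of_nonneg_right (mul_le_mul_of_nonneg_right hsq hpp) hQ
    have h2 : (4*c*ψt)*(p*(p-1))*ψt^(p-2) = 4*c*(p*(p-1))*ψt^(p-1) := by
      rw [← hE]; ring
    have h3 : ψt^(p-1) ≤ S^(p-1) :=
      Real.rpow_le_rpow hψt.le (hS t ht) (by linarith)
    have h4 : (0:ℝ) ≤ 2*p*(2*p-1)*c := by nlinarith
    have h5 : g2 t ≤ 2*p*(2*p-1)*c*ψt^(p-1) := by
      simp only [hg2_def]
      nlinarith [h1, h2]
    calc g2 t ≤ 2*p*(2*p-1)*c*ψt^(p-1) := h5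
      _ ≤ 2*p*(2*p-1)*c*S^(p-1) := mul_le_mul_of_nonneg_left h3 h4
  -- g1 monotone
  have mono1 : Monotone g1 := by
    apply monotone_of_deriv_nonneg (fun t => (hg1 t).differentiableAt)
    intro t
    rw [(hg1 t).deriv]
    exact hg2nonneg t
  -- lower bound: 0 ≤ g 1 - g 0 - g1 0
  have lower : g 0 + g1 0 * 1 ≤ g 1 + g1 0 * 0 := by
    have hG : ∀ t : ℝ, HasDerivAt (fun u => g u - g1 0 * u) (g1 t - g1 0) t := by
      intro t
      exact ((hg t).sub ((hasDerivAt_id t).const_mul (g1 0))).congr_deriv (by ring)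
    have := monotoneOn_of_deriv_nonneg (convex_Icc (0:ℝ) 1)
      (Continuous.continuousOn (Differentiable.continuous (fun t => (hG t).differentiableAt)))
      (fun t ht => ((hG t).differentiableAt).differentiableWithinAt)
      (fun t ht => by
        rw [(hG t).deriv]
        rw [interior_Icc] at ht
        have := mono1 ht.1.le
        linarith)
    have h01 := this (Set.left_mem_Icc.2 (by norm_num)) (Set.right_mem_Icc.2 (by norm_num)) (by norm_num)
    simp only at h01
    linarith
  -- phi := K*t - g1 t + g1 0 is monotone on Icc, phi 0 = 0
  have hphi : ∀ t : ℝ, HasDerivAt (fun u => K*u - g1 u + g1 0) (K - g2 t) t := by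
    intro t
    have h1 : HasDerivAt (fun u : ℝ => K*u) K t := by
      simpa using (hasDerivAt_id t).const_mul K
    simpa using (h1.sub (hg1 t)).add_const (g1 0)
  have phiMono : MonotoneOn (fun u => K*u - g1 u + g1 0) (Set.Icc (0:ℝ) 1) := by
    apply monotoneOn_of_deriv_nonneg (convex_Icc (0:ℝ) 1)
      (Continuous.continuousOn (Differentiable.continuous (fun t => (hphi t).differentiableAt)))
      (fun t ht => ((hphi t).differentiableAt).differentiableWithinAt)
    intro t ht
    rw [(hphi t).deriv, interior_Icc] at *
    have := hg2le t ⟨ht.1.le, ht.2.le⟩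
    linarith
  have phiNonneg : ∀ t ∈ Set.Icc (0:ℝ) 1, 0 ≤ K*t - g1 t + g1 0 := by
    intro t ht
    have := phiMono (Set.left_mem_Icc.2 (by norm_num)) ht ht.1
    simp only at this
    linarith
  -- F := K*t^2/2 - g t + g1 0 * t is monotone on Icc
  have hF : ∀ t : ℝ, HasDerivAt (fun u => K*u^2/2 - g u + g1 0 * u) (K*t - g1 t + g1 0) t := by
    intro t
    have h1 : HasDerivAt (fun u : ℝ => K*u^2/2) (K*t) t := by
      have := ((hasDerivAt_pow 2 t).const_mul K).div_const 2
      refine this.congr_deriv ?_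
      push_cast
      ring
    have h2 : HasDerivAt (fun u : ℝ => g1 0 * u) (g1 0) t := by
      simpa using (hasDerivAt_id t).const_mul (g1 0)
    exact (h1.sub (hg t)).add h2
  have FMono : MonotoneOn (fun u => K*u^2/2 - g u + g1 0 * u) (Set.Icc (0:ℝ) 1) := by
    apply monotoneOn_of_deriv_nonneg (convex_Icc (0:ℝ) 1)
      (Continuous.continuousOn (Differentiable.continuous (fun t => (hF t).differentiableAt)))
      (fun t ht => ((hF t).differentiableAt).differentiableWithinAt)
    intro t ht
    rw [(hF t).deriv]
    rw [interior_Icc] at ht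
    exact phiNonneg t ⟨ht.1.le, ht.2.le⟩
  have upper : K*(0:ℝ)^2/2 - g 0 + g1 0 * 0 ≤ K*(1:ℝ)^2/2 - g 1 + g1 0 * 1 :=
    FMono (Set.left_mem_Icc.2 (by norm_num)) (Set.right_mem_Icc.2 (by norm_num)) (by norm_num)
  -- conclude
  have hg0 : g 0 = a^p := by simp only [hg_def]; norm_num
  have hg1' : g 1 = (a+2*b+c)^p := by
    simp only [hg_def]; norm_num
  have hg10 : g1 0 = 2*p*a^(p-1)*b := by
    simp only [hg1_def]; norm_num; ring
  have hlow : 0 ≤ (a+2*b+c)^p - a^p - 2*p*a^(p-1)*b := by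
    rw [← hg0, ← hg1', ← hg10]; linarith
  have hup : (a+2*b+c)^p - a^p - 2*p*a^(p-1)*b ≤ K/2 := by
    rw [← hg0, ← hg1', ← hg10]; linarith
  rw [abs_of_nonneg hlow]
  rw [hK_def] at hup
  linarith

lemma sq_rpow (u : ℝ) (hu : 0 ≤ u) (q : ℝ) : ((u^2 : ℝ))^q = u^(2*q) := by
  rw [← Real.rpow_natCast u 2, ← Real.rpow_mul hu]
  norm_num

lemma rpow_two' (u : ℝ) : u^((2:ℝ)) = u^(2:ℕ) := by
  rw [show ((2:ℝ)) = ((2:ℕ):ℝ) by norm_num, Real.rpow_natCast]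

lemma tendsto_rpow_shift (D q : ℝ) (hq : 0 ≤ q) :
    Filter.Tendsto (fun ε : ℝ => (D + ε)^q) (nhdsWithin 0 (Set.Ioi 0)) (nhds (D^q)) := by
  have h1 : Filter.Tendsto (fun ε : ℝ => D + ε) (nhdsWithin 0 (Set.Ioi 0)) (nhds D) := by
    have hc : Continuous (fun ε : ℝ => D + ε) := by continuity
    simpa using (hc.tendsto 0).mono_left (nhdsWithin_le_nhds (s := Set.Ioi (0:ℝ)))
  exact ((Real.continuousAt_rpow_const D q (Or.inr hq)).tendsto).comp h1



/-- Taylor-expansion-type inequality for `x ↦ ‖x‖^{2p}` in a real inner product space. -/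
theorem stmt1 {H : Type*} [NormedAddCommGroup H] [InnerProductSpace ℝ H]
    (p : ℝ) (hp : 1 ≤ p) (x h : H) :
    |‖x + h‖ ^ (2 * p) - ‖x‖ ^ (2 * p)
        - 2 * p * ‖x‖ ^ (2 * (p - 1)) * (inner ℝ x h : ℝ)|
      ≤ (2 * p * (2 * p - 1) * (2 : ℝ) ^ (2 * p - 3)) *
        (‖x‖ ^ (2 * (p - 1)) * ‖h‖ ^ (2 : ℝ) + ‖h‖ ^ (2 * p)) := by
  set s : ℝ := ‖x‖ with hs_def
  set r : ℝ := ‖h‖ with hr_def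
  set b : ℝ := (inner ℝ x h : ℝ) with hb_def
  have hs0 : 0 ≤ s := norm_nonneg x
  have hr0 : 0 ≤ r := norm_nonneg h
  have hb2 : b^2 ≤ s^2 * r^2 := by
    have := abs_real_inner_le_norm x h
    have h2 : b^2 = |b|^2 := (sq_abs b).symm
    nlinarith [abs_nonneg b]
  have hexp : ∀ t : ℝ, ‖x + t • h‖^2 = s^2 + 2*b*t + r^2*t^2 := by
    intro t
    rw [norm_add_sq_real, real_inner_smul_right, norm_smul]
    simp only [Real.norm_eq_abs, mul_pow, sq_abs]
    ring
  -- the ε-free estimate via limits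
  set A : ℝ := ‖x + h‖^2 with hA_def
  have hA : A = s^2 + 2*b + r^2 := by
    have := hexp 1
    rw [one_smul] at this
    simpa using this
  have main_est : |A^p - (s^2:ℝ)^p - 2*p*((s^2:ℝ))^(p-1)*b|
      ≤ p*(2*p-1)*r^2*(((s+r)^2:ℝ))^(p-1) := by
    apply le_of_tendsto_of_tendsto
      (f := fun ε : ℝ => |(A+ε)^p - (s^2+ε)^p - 2*p*(s^2+ε)^(p-1)*b|)
      (g := fun ε : ℝ => p*(2*p-1)*r^2*((s+r)^2+ε)^(p-1))
      (b := nhdsWithin 0 (Set.Ioi 0))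
    · -- Tendsto f
      have t1 := tendsto_rpow_shift A p (by linarith)
      have t2 := tendsto_rpow_shift (s^2) p (by linarith)
      have t3 := tendsto_rpow_shift (s^2) (p-1) (by linarith)
      exact ((t1.sub t2).sub (((t3.const_mul (2*p))).mul_const b)).abs
    · exact (tendsto_rpow_shift ((s+r)^2) (p-1) (by linarith)).const_mul (p*(2*p-1)*r^2)
    · apply Filter.eventually_of_mem self_mem_nhdsWithin
      intro ε hε
      rw [Set.mem_Ioi] at hε
      have hk := key p (s^2+ε) b (r^2) ((s+r)^2+ε) hp (by positivity)
        (by nlinarith)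
        (by
          intro t
          have h0 := sq_nonneg ‖x + t • h‖
          rw [hexp t] at h0
          nlinarith)
        (by
          intro t ht
          have hn : ‖x + t • h‖ ≤ s + r := by
            refine (norm_add_le _ _).trans ?_
            rw [norm_smul, Real.norm_eq_abs]
            have : |t| ≤ 1 := by rw [abs_le]; constructor <;> [linarith [ht.1]; exact ht.2]
            nlinarith
          have h0 := pow_le_pow_left₀ (norm_nonneg _) hn 2
          rw [hexp t] at h0
          nlinarith)
      have e1 : (s^2+ε)+2*b+r^2 = A+ε := by rw [hA]; ring
      rw [e1] at hk
      exact hk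
  have alg : p*(2*p-1)*r^2*(((s+r)^2:ℝ))^(p-1)
      ≤ (2*p*(2*p-1)*(2:ℝ)^(2*p-3)) * (((s^2:ℝ))^(p-1)*r^2 + ((r^2:ℝ))^p) := by
    have hm : 0 ≤ max s r := le_trans hs0 (le_max_left s r)
    have hsr : s + r ≤ 2 * max s r := by
      have := le_max_left s r
      have := le_max_right s r
      linarith
    have e2 : (((s+r)^2:ℝ))^(p-1) = (s+r)^(2*p-2) := by
      rw [sq_rpow (s+r) (by positivity) (p-1), show 2*(p-1) = 2*p-2 by ring]
    have h5 : (s+r)^(2*p-2) ≤ (2*max s r)^(2*p-2) :=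
      Real.rpow_le_rpow (by positivity) hsr (by linarith)
    have h6 : ((2*max s r):ℝ)^(2*p-2) = (2:ℝ)^(2*p-2) * (max s r)^(2*p-2) :=
      Real.mul_rpow (by norm_num) hm
    have h7 : (max s r)^(2*p-2) ≤ s^(2*p-2) + r^(2*p-2) := by
      rcases max_choice s r with hmc | hmc <;> rw [hmc]
      · exact le_add_of_nonneg_right (Real.rpow_nonneg hr0 _)
      · exact le_add_of_nonneg_left (Real.rpow_nonneg hs0 _)
    have h8 : (2:ℝ)^(2*p-2) = 2*(2:ℝ)^(2*p-3) := by
      rw [show (2:ℝ)*p-2 = 1+(2*p-3) by ring, Real.rpow_add two_pos, Real.rpow_one]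
    have h9 : ((s^2:ℝ))^(p-1) = s^(2*p-2) := by
      rw [sq_rpow s hs0 (p-1), show 2*(p-1) = 2*p-2 by ring]
    have h10 : ((r^2:ℝ))^p = r^(2*p-2) * r^2 := by
      rw [sq_rpow r hr0 p, ← rpow_two' r,
        ← Real.rpow_add' hr0 (show (2*p-2)+2 ≠ 0 by intro hcon; linarith),
        show 2*p-2+2 = 2*p by ring]
    have hcoef : (0:ℝ) ≤ p*(2*p-1)*r^2 :=
      mul_nonneg (mul_nonneg (by linarith) (by linarith)) (sq_nonneg r)
    calc p*(2*p-1)*r^2*(((s+r)^2:ℝ))^(p-1)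
        ≤ p*(2*p-1)*r^2*((2:ℝ)^(2*p-2)*(s^(2*p-2)+r^(2*p-2))) := by
          apply mul_le_mul_of_nonneg_left ?_ hcoef
          rw [e2]
          calc (s+r)^(2*p-2) ≤ (2*max s r)^(2*p-2) := h5
            _ = (2:ℝ)^(2*p-2) * (max s r)^(2*p-2) := h6
            _ ≤ (2:ℝ)^(2*p-2) * (s^(2*p-2)+r^(2*p-2)) :=
                mul_le_mul_of_nonneg_left h7 (Real.rpow_nonneg (by norm_num) _)
      _ = (2*p*(2*p-1)*(2:ℝ)^(2*p-3)) * (((s^2:ℝ))^(p-1)*r^2 + ((r^2:ℝ))^p) := by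
          rw [h8, h9, h10]; ring
  rw [← sq_rpow ‖x+h‖ (norm_nonneg _) p, ← sq_rpow s hs0 p, ← sq_rpow s hs0 (p-1),
    ← sq_rpow r hr0 p, rpow_two' r]
  exact main_est.trans alg
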